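/- arXiv:1005.1033 — 3 statements merged into one kernel-verified Lean document; each statement's English description precedes it below -/
import Mathlib

section
/- For any vectors A, B in a real inner product space, ⟨B − A, −A⟩ = ((1 + √2)/2)·‖−(√(2 + √2)/2)·A + (√(2 − √2)/2)·B‖² − ((−1 + √2)/2)·‖(√(2 − √2)/2)·A + (√(2 + √2)/2)·B‖². -/
/-!
With `c = √(2 + √2) / 2 = cos (π / 8)` and `s = √(2 - √2) / 2 = sin (π / 8)`, the vectors
`-c A + s B` and `s A + c B` are the coordinates of `(A, B)` in an orthonormal eigenbasis of the
matrix `[[1, -1/2], [-1/2, 0]]` of the quadratic form `⟪B - A, -A⟫ = ‖A‖² - ⟪A, B⟫`, whose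
eigenvalues are `(1 ± √2) / 2`. Expanding both squared norms reduces the identity to three scalar
equations in `c`, `s` and `√2`.
-/

open Real RealInnerProductSpace

section

variable {E : Type*} [NormedAddCommGroup E] [InnerProductSpace ℝ E]

theorem norm_smul_add_smul_sq (a b : ℝ) (x y : E) :
    ‖a • x + b • y‖ ^ 2 = a ^ 2 * ‖x‖ ^ 2 + 2 * (a * b) * ⟪x, y⟫ + b ^ 2 * ‖y‖ ^ 2 := by
  rw [norm_add_sq_real, norm_smul, norm_smul, real_inner_smul_left, real_inner_smul_right,
    mul_pow, mul_pow, Real.norm_eq_abs, Real.norm_eq_abs, sq_abs, sq_abs]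
  ring

theorem inner_sub_neg_eq_of_diagonalization {c s l m : ℝ} (h₁ : l * c ^ 2 - m * s ^ 2 = 1)
    (h₂ : l * s ^ 2 - m * c ^ 2 = 0) (h₃ : 2 * (c * s) * (l + m) = 1) (A B : E) :
    ⟪B - A, -A⟫ = l * ‖-(c • A) + s • B‖ ^ 2 - m * ‖s • A + c • B‖ ^ 2 := by
  rw [← neg_smul, norm_smul_add_smul_sq, norm_smul_add_smul_sq, inner_neg_right, inner_sub_left,
    real_inner_self_eq_norm_sq, real_inner_comm]
  linear_combination -‖A‖ ^ 2 * h₁ - ‖B‖ ^ 2 * h₂ + ⟪A, B⟫ * h₃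

end

theorem sqrt_two_add_sqrt_two_div_two_sq : (√(2 + √2) / 2) ^ 2 = (2 + √2) / 4 := by
  rw [div_pow, sq_sqrt (by positivity)]
  norm_num

theorem sqrt_two_sub_sqrt_two_div_two_sq : (√(2 - √2) / 2) ^ 2 = (2 - √2) / 4 := by
  have hle : √2 ≤ 2 := by nlinarith [sq_sqrt (by norm_num : (0 : ℝ) ≤ 2), sqrt_nonneg 2]
  rw [div_pow, sq_sqrt (by linarith)]
  norm_num

theorem sqrt_two_add_sqrt_two_mul_sqrt_two_sub_sqrt_two :
    √(2 + √2) / 2 * (√(2 - √2) / 2) = √2 / 4 := by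
  have hprod : (2 + √2) * (2 - √2) = 2 := by nlinarith [sq_sqrt (by norm_num : (0 : ℝ) ≤ 2)]
  rw [div_mul_div_comm, ← sqrt_mul (by positivity), hprod]
  norm_num

theorem pinned_inner_eq_combination_of_sq_norms
    {E : Type*} [NormedAddCommGroup E] [InnerProductSpace ℝ E] (A B : E) :
    (inner ℝ (B - A) (-A) : ℝ) =
      ((1 + Real.sqrt 2) / 2) *
        ‖-((Real.sqrt (2 + Real.sqrt 2) / 2) • A) + (Real.sqrt (2 - Real.sqrt 2) / 2) • B‖ ^ 2 -
      ((-1 + Real.sqrt 2) / 2) *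
        ‖(Real.sqrt (2 - Real.sqrt 2) / 2) • A + (Real.sqrt (2 + Real.sqrt 2) / 2) • B‖ ^ 2 := by
  have hsq : √2 ^ 2 = 2 := sq_sqrt (by norm_num)
  apply inner_sub_neg_eq_of_diagonalization
  · rw [sqrt_two_add_sqrt_two_div_two_sq, sqrt_two_sub_sqrt_two_div_two_sq]
    linear_combination hsq / 4
  · rw [sqrt_two_add_sqrt_two_div_two_sq, sqrt_two_sub_sqrt_two_div_two_sq]
    linear_combination -hsq / 4
  · rw [sqrt_two_add_sqrt_two_mul_sqrt_two_sub_sqrt_two]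
    linear_combination hsq / 2
end

section
/- For all real numbers u and v, (1/(2π)) · ∫₀^{2π} (√3 − (1 + iu)·cos θ − (1 + iv)·sin θ)⁻¹ dθ = ((u − i)² + (v − i)² + 3)^(−1/2), where the complex power is taken with the principal branch. -/
/-!
With `z = e^{iθ}` the integrand becomes `2i / P(z)` for the quadratic
`P(z) = (a - i b) z² - 2 c z + (a + i b)`, whose roots are `(c ± s) / (a - i b)` with
`s² = c² - a² - b²`. By the residue theorem the normalised integral is `0`, `1/s` or `-1/s`,
according to which roots lie in the unit disc. No location estimate for the roots is needed:
when `c - a cos θ - b sin θ` has positive real part, so does its inverse, hence so does the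
integral, and this rules out `0` and singles out the square root with positive real part,
i.e. the principal one.
-/

open Complex Real Metric

theorem Complex.re_inv_pos {z : ℂ} (hz : 0 < z.re) : 0 < z⁻¹.re := by
  rw [inv_re]
  exact div_pos hz (normSq_pos.2 fun h => by simp [h] at hz)

theorem circleIntegral_sub_inv_eq_zero_or_eq {c w : ℂ} {R : ℝ} (hR : 0 ≤ R)
    (hw : w ∉ sphere c R) :
    (∮ z in C(c, R), (z - w)⁻¹) = 0 ∨ (∮ z in C(c, R), (z - w)⁻¹) = 2 * π * I := by
  rcases lt_or_gt_of_ne (mt mem_sphere.2 hw) with hin | hout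
  · exact .inr (circleIntegral.integral_sub_inv_of_mem_ball hin)
  · refine .inl (DiffContOnCl.circleIntegral_eq_zero hR ?_)
    refine ((differentiableOn_id.sub_const w).inv fun z hz => sub_ne_zero.2 hz).diffContOnCl_ball
      fun z hz (hzw : z = w) => ?_
    exact (mem_closedBall.1 (hzw ▸ hz)).not_gt hout

-- Stated for `A * (A * z - w)⁻¹` rather than `(z - w / A)⁻¹` so that `A = 0` is allowed.
theorem circleIntegral_mul_inv_mul_sub_eq_zero_or_eq {c A w : ℂ} {R : ℝ} (hR : 0 ≤ R)
    (hw : ∀ z ∈ sphere c R, A * z - w ≠ 0) :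
    (∮ z in C(c, R), A * (A * z - w)⁻¹) = 0 ∨
      (∮ z in C(c, R), A * (A * z - w)⁻¹) = 2 * π * I := by
  rcases eq_or_ne A 0 with rfl | hA
  · simp [circleIntegral]
  have hinv : ∀ z, A * (A * z - w)⁻¹ = (z - w / A)⁻¹ := fun z => by
    rw [← div_eq_mul_inv, ← inv_div, sub_div, mul_div_cancel_left₀ _ hA]
  simp only [hinv]
  refine circleIntegral_sub_inv_eq_zero_or_eq hR fun hmem => hw _ hmem ?_
  rw [mul_div_cancel₀ _ hA, sub_self]

theorem quadratic_eq_mul_of_sq_eq {A B c s : ℂ} (hs : s ^ 2 = c ^ 2 - A * B) (hcs : c + s ≠ 0)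
    (z : ℂ) : A * z ^ 2 - 2 * c * z + B = (A * z - (c + s)) * (z - B / (c + s)) := by
  field_simp
  linear_combination z * hs

theorem inv_quadratic_eq_of_sq_eq {A B c s z : ℂ} (hs : s ^ 2 = c ^ 2 - A * B) (hs0 : s ≠ 0)
    (hcs : c + s ≠ 0) (hz : A * z ^ 2 - 2 * c * z + B ≠ 0) :
    (A * z ^ 2 - 2 * c * z + B)⁻¹ =
      (2 * s)⁻¹ * (A * (A * z - (c + s))⁻¹ - (z - B / (c + s))⁻¹) := by
  rw [quadratic_eq_mul_of_sq_eq hs hcs] at hz ⊢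
  obtain ⟨h₁, h₂⟩ := mul_ne_zero_iff.1 hz
  rw [sub_div' hcs, div_ne_zero_iff, and_iff_left hcs] at h₂
  field_simp
  linear_combination hs

theorem quadratic_circleMap_eq (a b c : ℂ) (θ : ℝ) :
    (a - I * b) * circleMap 0 1 θ ^ 2 - 2 * c * circleMap 0 1 θ + (a + I * b) =
      -2 * circleMap 0 1 θ * (c - a * Real.cos θ - b * Real.sin θ) := by
  have hcos : (Real.cos θ : ℂ) = (exp (θ * I) + (exp (θ * I))⁻¹) / 2 := by
    rw [ofReal_cos, Complex.cos, neg_mul, Complex.exp_neg]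
  have hsin : (Real.sin θ : ℂ) = ((exp (θ * I))⁻¹ - exp (θ * I)) * I / 2 := by
    rw [ofReal_sin, Complex.sin, neg_mul, Complex.exp_neg]
  have he : exp (θ * I) ≠ 0 := exp_ne_zero _
  rw [circleMap_zero, ofReal_one, one_mul, hcos, hsin]
  field_simp
  ring

theorem integral_inv_eq_circleIntegral_inv_quadratic (a b c : ℂ) :
    ∫ θ in (0 : ℝ)..2 * π, (c - a * Real.cos θ - b * Real.sin θ)⁻¹ =
      ∮ z in C(0, 1), 2 * I * ((a - I * b) * z ^ 2 - 2 * c * z + (a + I * b))⁻¹ := by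
  refine intervalIntegral.integral_congr fun θ _ => ?_
  have hz : circleMap 0 1 θ ≠ 0 := circleMap_ne_center one_ne_zero
  simp only [deriv_circleMap, smul_eq_mul, quadratic_circleMap_eq, mul_inv]
  field_simp
  linear_combination (c - a * Real.cos θ - b * Real.sin θ)⁻¹ * I_sq

theorem circleIntegral_inv_quadratic_mem {A B c s : ℂ} (hs : s ^ 2 = c ^ 2 - A * B)
    (hs0 : s ≠ 0) (hcs : c + s ≠ 0)
    (hP : ∀ z ∈ sphere (0 : ℂ) 1, A * z ^ 2 - 2 * c * z + B ≠ 0) :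
    (2 * π * I)⁻¹ * (∮ z in C(0, 1), (A * z ^ 2 - 2 * c * z + B)⁻¹) ∈
      ({0, (2 * s)⁻¹, -(2 * s)⁻¹} : Set ℂ) := by
  have hroot₁ : ∀ z ∈ sphere (0 : ℂ) 1, A * z - (c + s) ≠ 0 := fun z hz =>
    left_ne_zero_of_mul (quadratic_eq_mul_of_sq_eq hs hcs z ▸ hP z hz)
  have hroot₂ : ∀ z ∈ sphere (0 : ℂ) 1, z - B / (c + s) ≠ 0 := fun z hz =>
    right_ne_zero_of_mul (quadratic_eq_mul_of_sq_eq hs hcs z ▸ hP z hz)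
  have hsplit : (∮ z in C(0, 1), (A * z ^ 2 - 2 * c * z + B)⁻¹) = (2 * s)⁻¹ *
      ((∮ z in C(0, 1), A * (A * z - (c + s))⁻¹) - ∮ z in C(0, 1), (z - B / (c + s))⁻¹) := by
    rw [← circleIntegral.integral_sub, ← circleIntegral.integral_const_mul]
    · exact circleIntegral.integral_congr zero_le_one fun z hz =>
        inv_quadratic_eq_of_sq_eq hs hs0 hcs (hP z hz)
    · exact (continuousOn_const.mul (((continuousOn_const.mul continuousOn_id).sub
        continuousOn_const).inv₀ hroot₁)).circleIntegrable zero_le_one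
    · exact ((continuousOn_id.sub continuousOn_const).inv₀ hroot₂).circleIntegrable zero_le_one
  rcases circleIntegral_mul_inv_mul_sub_eq_zero_or_eq zero_le_one hroot₁ with h₁ | h₁ <;>
  rcases circleIntegral_sub_inv_eq_zero_or_eq zero_le_one
    (fun hmem => hroot₂ _ hmem (sub_self _)) with h₂ | h₂ <;>
  · simp only [hsplit, h₁, h₂, mul_left_comm _ (2 * s)⁻¹, mul_sub, mul_zero,
      inv_mul_cancel₀ two_pi_I_ne_zero]
    simp

theorem integral_inv_sub_mul_cos_sub_mul_sin_mem {a b c s : ℂ}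
    (hD : ∀ θ : ℝ, c - a * Real.cos θ - b * Real.sin θ ≠ 0)
    (hs : s ^ 2 = c ^ 2 - a ^ 2 - b ^ 2) (hs0 : s ≠ 0) (hcs : c + s ≠ 0) :
    (1 / (2 * π : ℂ)) * ∫ θ in (0 : ℝ)..2 * π, (c - a * Real.cos θ - b * Real.sin θ)⁻¹ ∈
      ({0, s⁻¹, -s⁻¹} : Set ℂ) := by
  have hP : ∀ z ∈ sphere (0 : ℂ) 1, (a - I * b) * z ^ 2 - 2 * c * z + (a + I * b) ≠ 0 := by
    intro z hz
    obtain ⟨θ, rfl⟩ : z ∈ Set.range (circleMap 0 1) := by simpa [range_circleMap] using hz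
    rw [quadratic_circleMap_eq]
    exact mul_ne_zero (mul_ne_zero (by norm_num) (circleMap_ne_center one_ne_zero)) (hD θ)
  have hres := circleIntegral_inv_quadratic_mem (by linear_combination hs - b ^ 2 * I_sq) hs0 hcs hP
  have hscale : ∀ x : ℂ, 1 / (2 * π : ℂ) * (2 * I * x) = -2 * ((2 * π * I)⁻¹ * x) := fun x => by
    have hπ : (π : ℂ) ≠ 0 := ofReal_ne_zero.2 pi_ne_zero
    field_simp
    linear_combination x * I_sq
  rw [integral_inv_eq_circleIntegral_inv_quadratic, circleIntegral.integral_const_mul, hscale]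
  simp only [Set.mem_insert_iff, Set.mem_singleton_iff] at hres ⊢
  rcases hres with h | h | h <;> rw [h]
  · exact .inl (mul_zero _)
  · exact .inr (.inr (by field_simp))
  · exact .inr (.inl (by field_simp))

theorem re_integral_inv_pos {f : ℝ → ℂ} {a b : ℝ} (hab : a < b) (hf : Continuous f)
    (hre : ∀ x, 0 < (f x).re) : 0 < (∫ x in a..b, (f x)⁻¹).re := by
  have hf0 : ∀ x, f x ≠ 0 := fun x h => (hre x).ne' (by rw [h, zero_re])
  have hcont : Continuous fun x => (f x)⁻¹ := hf.inv₀ hf0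
  rw [← RCLike.re_to_complex, ← intervalIntegral.intervalIntegral_re (hcont.intervalIntegrable a b)]
  refine intervalIntegral.intervalIntegral_pos_of_pos_on
    ((RCLike.continuous_re.comp hcont).intervalIntegrable a b) (fun x _ => ?_) hab
  exact re_inv_pos (hre x)

theorem cpow_neg_half_eq_of_sq_mul_eq_one {x J : ℂ} (hJ : 0 < J.re) (h : J ^ 2 * x = 1) :
    x ^ (-(1 / 2) : ℂ) = J := by
  have hx : x = J⁻¹ ^ 2 := by
    rw [inv_pow]
    exact eq_inv_of_mul_eq_one_right h
  rw [hx, one_div, cpow_neg, sq_cpow_two_inv (re_inv_pos hJ), inv_inv]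

theorem integral_inv_sub_mul_cos_sub_mul_sin {a b c : ℂ}
    (hre : ∀ θ : ℝ, 0 < (c - a * Real.cos θ - b * Real.sin θ).re)
    (hS : c ^ 2 - a ^ 2 - b ^ 2 ≠ 0) :
    (1 / (2 * π : ℂ)) * ∫ θ in (0 : ℝ)..2 * π, (c - a * Real.cos θ - b * Real.sin θ)⁻¹ =
      (c ^ 2 - a ^ 2 - b ^ 2) ^ (-(1 / 2) : ℂ) := by
  set J := (1 / (2 * π : ℂ)) * ∫ θ in (0 : ℝ)..2 * π, (c - a * Real.cos θ - b * Real.sin θ)⁻¹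
    with hJdef
  have hD : ∀ θ : ℝ, c - a * Real.cos θ - b * Real.sin θ ≠ 0 := fun θ h =>
    (hre θ).ne' (by rw [h, zero_re])
  have hJ : 0 < J.re := by
    have hscalar : (1 / (2 * π : ℂ)) = ((1 / (2 * π) : ℝ) : ℂ) := by push_cast; rfl
    rw [hJdef, hscalar, re_ofReal_mul]
    exact mul_pos (by positivity) (re_integral_inv_pos two_pi_pos (by fun_prop) hre)
  obtain ⟨s, hs⟩ := Complex.isSquare (c ^ 2 - a ^ 2 - b ^ 2)
  rw [← sq, eq_comm] at hs
  have hs0 : s ≠ 0 := by rintro rfl; exact hS (by rw [← hs]; ring)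
  -- `c + s` and `c - s` do not both vanish, and `s ↦ -s` permutes `{0, s⁻¹, -s⁻¹}`
  have hJs : J = s⁻¹ ∨ J = -s⁻¹ := by
    wlog hcs : c + s ≠ 0 generalizing s
    · have hcs' : c + -s ≠ 0 := by
        rw [show c + -s = -(2 * s) by linear_combination not_not.1 hcs]; simpa using hs0
      rcases this (-s) (by rwa [neg_sq]) (neg_ne_zero.2 hs0) hcs' with h | h
      · exact .inr (by rw [h, inv_neg])
      · exact .inl (by rw [h, inv_neg, neg_neg])
    have hmem := integral_inv_sub_mul_cos_sub_mul_sin_mem hD hs hs0 hcs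
    rw [← hJdef] at hmem
    rcases hmem with h | h | h
    · rw [h, zero_re] at hJ
      exact absurd hJ (lt_irrefl 0)
    · exact .inl h
    · exact .inr h
  refine (cpow_neg_half_eq_of_sq_mul_eq_one hJ ?_).symm
  rw [← hs]
  rcases hJs with h | h <;> rw [h] <;> field_simp

theorem pinned_contour_integral_eval (u v : ℝ) :
    (1 / (2 * (Real.pi : ℂ))) *
      ∫ θ in (0:ℝ)..(2 * Real.pi),
        ((Real.sqrt 3 : ℂ) - (1 + Complex.I * u) * (Real.cos θ : ℂ) -
          (1 + Complex.I * v) * (Real.sin θ : ℂ))⁻¹ =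
    (((u : ℂ) - Complex.I) ^ 2 + ((v : ℂ) - Complex.I) ^ 2 + 3) ^ (-(1 / 2) : ℂ) := by
  have hS : (Real.sqrt 3 : ℂ) ^ 2 - (1 + I * u) ^ 2 - (1 + I * v) ^ 2 =
      ((u : ℂ) - I) ^ 2 + ((v : ℂ) - I) ^ 2 + 3 := by
    rw [← ofReal_pow, Real.sq_sqrt zero_le_three]
    push_cast
    linear_combination (-(u : ℂ) ^ 2 - (v : ℂ) ^ 2 - 2) * I_sq
  rw [← hS]
  refine integral_inv_sub_mul_cos_sub_mul_sin (fun θ => ?_) ?_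
  · have hsum : Real.cos θ + Real.sin θ < Real.sqrt 3 := Real.lt_sqrt_of_sq_lt (by
      nlinarith [Real.sin_sq_add_cos_sq θ, sq_nonneg (Real.cos θ - Real.sin θ)])
    simpa [-ofReal_cos, -ofReal_sin, sub_sub] using hsum
  · have hre : (((u : ℂ) - I) ^ 2 + ((v : ℂ) - I) ^ 2 + 3).re = u ^ 2 + v ^ 2 + 1 := by
      simp only [sq, add_re, mul_re, sub_re, ofReal_re, I_re, sub_zero, sub_im, ofReal_im, I_im,
        zero_sub, mul_neg, mul_one, neg_neg, re_ofNat]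
      ring
    rw [hS]
    refine ne_of_apply_ne re ?_
    rw [hre, zero_re]
    positivity
end

section
/- For all real numbers u and v, (1/(2π)) · ∫_{ℝ²} exp((1 + iu)·x + (1 + iv)·y − √3·√(x² + y²)) / √(x² + y²) dx dy = ((u − i)² + (v − i)² + 3)^(−1/2), where the complex power is taken with the principal branch. -/
/-!
In polar coordinates the weight `1 / r` cancels the Jacobian, and with `α = 1 + iu`,
`β = 1 + iv`, `m(θ) = α cos θ + β sin θ - √3` (so `Re m ≤ √2 - √3 < 0`) the radial integral of
`exp (r m(θ))` is `-1 / m(θ)`. Substituting `z = e^{iθ}` turns the angular integral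
`∫ dθ / (√3 - α cos θ - β sin θ)` into a contour integral over the unit circle of a rational
function with exactly one pole inside the disc; Cauchy's formula evaluates it to `2π / w`, where
`w² = 3 - α² - β² = (u - i)² + (v - i)² + 3` and `w` is the principal square root.
-/

open MeasureTheory Complex Set Real

theorem integral_inv_sub_mul_circleMap_sub_mul_inv {a b c w : ℂ}
    (hw : w ^ 2 = c ^ 2 - 4 * a * b) (ha : ‖2 * a‖ < ‖c + w‖) (hb : ‖2 * b‖ < ‖c + w‖) :
    ∫ θ in 0..2 * π, (c - a * circleMap 0 1 θ - b * (circleMap 0 1 θ)⁻¹)⁻¹ = 2 * π / w := by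
  have hcw : c + w ≠ 0 := norm_pos_iff.mp ((norm_nonneg _).trans_lt hb)
  -- `z₀` is the root of `a z² - c z + b` inside the unit disc.
  set z₀ := 2 * b / (c + w)
  have hz₀ : z₀ * (c + w) = 2 * b := div_mul_cancel₀ _ hcw
  have haz₀ : a * z₀ = (c - w) / 2 := by
    apply mul_right_cancel₀ hcw
    linear_combination a * hz₀ + hw / 2
  have hz₀_mem : z₀ ∈ Metric.ball (0 : ℂ) 1 := by
    rw [mem_ball_zero_iff, norm_div, div_lt_one (norm_pos_iff.mpr hcw)]
    exact hb
  have hL : ∀ z ∈ Metric.closedBall (0 : ℂ) 1, (c + w) / 2 - a * z ≠ 0 := by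
    intro z hz h
    have : ‖c + w‖ ≤ ‖2 * a‖ := calc
      ‖c + w‖ = ‖2 * a * z‖ := by rw [show c + w = 2 * a * z by linear_combination 2 * h]
      _ ≤ ‖2 * a‖ := by
        rw [norm_mul]
        exact mul_le_of_le_one_right (norm_nonneg _) (mem_closedBall_zero_iff.mp hz)
    exact this.not_gt ha
  set f : ℂ → ℂ := fun z ↦ (I * ((c + w) / 2 - a * z))⁻¹
  have hf : DiffContOnCl ℂ f (Metric.ball 0 1) := by
    refine DifferentiableOn.diffContOnCl ?_
    rw [closure_ball _ one_ne_zero]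
    exact (by fun_prop : Differentiable ℂ _).differentiableOn.inv
      fun z hz ↦ mul_ne_zero I_ne_zero (hL z hz)
  have hfz₀ : f z₀ = (I * w)⁻¹ := by
    simp only [f, haz₀]
    ring_nf
  have hintegrand (θ : ℝ) : deriv (circleMap 0 1) θ • (circleMap 0 1 θ - z₀)⁻¹ •
      f (circleMap 0 1 θ) = (c - a * circleMap 0 1 θ - b * (circleMap 0 1 θ)⁻¹)⁻¹ := by
    rw [deriv_circleMap, smul_eq_mul, smul_eq_mul]
    set z := circleMap 0 1 θ
    have hz : z ≠ 0 := circleMap_ne_center one_ne_zero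
    have hfactor : (z - z₀) * (I * ((c + w) / 2 - a * z)) =
        I * ((c - a * z - b * z⁻¹) * z) := by
      linear_combination I * (z * haz₀ - hz₀ / 2 + b * inv_mul_cancel₀ hz)
    calc z * I * ((z - z₀)⁻¹ * f z)
        = z * I * (I * ((c - a * z - b * z⁻¹) * z))⁻¹ := by rw [← hfactor, mul_inv]
      _ = (z * z⁻¹) * (I * I⁻¹) * (c - a * z - b * z⁻¹)⁻¹ := by rw [mul_inv, mul_inv]; ring
      _ = (c - a * z - b * z⁻¹)⁻¹ := by simp [hz]
  calc _ = ∮ z in C(0, 1), (z - z₀)⁻¹ • f z :=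
        (intervalIntegral.integral_congr fun θ _ ↦ hintegrand θ).symm
    _ = (2 * π * I) • f z₀ := hf.circleIntegral_sub_inv_smul hz₀_mem
    _ = 2 * π / w := by
      rw [hfz₀, smul_eq_mul]
      field_simp

theorem mul_cos_add_mul_sin_eq_circleMap (α β : ℂ) (θ : ℝ) :
    α * Real.cos θ + β * Real.sin θ =
      (α - I * β) / 2 * circleMap 0 1 θ + (α + I * β) / 2 * (circleMap 0 1 θ)⁻¹ := by
  rw [circleMap_zero, ofReal_one, one_mul, ← Complex.exp_neg, ofReal_cos, ofReal_sin,
    Complex.cos, Complex.sin]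
  ring_nf

theorem integral_inv_sub_mul_cos_sub_mul_sin_s13 {c α β w : ℂ}
    (hw : w ^ 2 = c ^ 2 - α ^ 2 - β ^ 2) (h₁ : ‖α - I * β‖ < ‖c + w‖)
    (h₂ : ‖α + I * β‖ < ‖c + w‖) (t : ℝ) :
    ∫ θ in t..t + 2 * π, (c - α * Real.cos θ - β * Real.sin θ)⁻¹ = 2 * π / w := by
  have hperiodic : Function.Periodic (fun θ : ℝ ↦ (c - α * Real.cos θ - β * Real.sin θ)⁻¹)
      (2 * π) := fun θ ↦ by simp only [Real.cos_add_two_pi, Real.sin_add_two_pi]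
  rw [hperiodic.intervalIntegral_add_eq t 0, zero_add]
  simp_rw [sub_sub, mul_cos_add_mul_sin_eq_circleMap, ← sub_sub]
  refine integral_inv_sub_mul_circleMap_sub_mul_inv ?_ ?_ ?_
  · linear_combination hw - β ^ 2 * I_sq
  · rwa [mul_div_cancel₀ _ two_ne_zero]
  · rwa [mul_div_cancel₀ _ two_ne_zero]

theorem mul_cos_add_mul_sin_le_sqrt (a b θ : ℝ) :
    a * Real.cos θ + b * Real.sin θ ≤ √(a ^ 2 + b ^ 2) :=
  (le_abs_self _).trans <| abs_le_sqrt <| by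
    nlinarith [sq_nonneg (a * Real.sin θ - b * Real.cos θ), Real.sin_sq_add_cos_sq θ]

theorem setIntegral_Ioi_prod_cexp_mul {m : ℝ → ℂ} (hm : Continuous m) {δ : ℝ} (hδ : 0 < δ)
    (hm_re : ∀ θ, (m θ).re ≤ -δ) {a b : ℝ} (hab : a ≤ b) :
    ∫ p : ℝ × ℝ in Ioi 0 ×ˢ Ioo a b, cexp (p.1 * m p.2) = ∫ θ in a..b, (-m θ)⁻¹ := by
  have hint : Integrable (fun p : ℝ × ℝ ↦ cexp (p.1 * m p.2))
      ((volume.restrict (Ioi 0)).prod (volume.restrict (Ioo a b))) := by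
    have hbound : Integrable (fun p : ℝ × ℝ ↦ Real.exp (-δ * p.1) * 1)
        ((volume.restrict (Ioi 0)).prod (volume.restrict (Ioo a b))) :=
      (exp_neg_integrableOn_Ioi 0 hδ).mul_prod (integrableOn_const (by simp))
    refine hbound.mono' (by fun_prop) ?_
    rw [Measure.prod_restrict]
    filter_upwards [ae_restrict_mem (measurableSet_Ioi.prod measurableSet_Ioo)] with p hp
    rw [norm_exp, mul_one, re_ofReal_mul, Real.exp_le_exp, mul_comm (-δ)]
    exact mul_le_mul_of_nonneg_left (hm_re p.2) (le_of_lt hp.1)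
  rw [Measure.volume_eq_prod, ← Measure.prod_restrict, integral_prod_symm _ hint,
    intervalIntegral.integral_of_le hab, integral_Ioc_eq_integral_Ioo]
  congr 1 with θ
  simp_rw [mul_comm _ (m θ)]
  rw [integral_exp_mul_complex_Ioi ((hm_re θ).trans_lt (neg_lt_zero.mpr hδ)) 0]
  simp [neg_div, inv_neg]

theorem integral_cexp_sub_mul_sqrt_div_sqrt {α β : ℂ} {c : ℝ}
    (hc : √(α.re ^ 2 + β.re ^ 2) < c) :
    ∫ p : ℝ × ℝ, cexp (α * p.1 + β * p.2 - c * √(p.1 ^ 2 + p.2 ^ 2)) / √(p.1 ^ 2 + p.2 ^ 2) =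
      ∫ θ in -π..π, (c - α * Real.cos θ - β * Real.sin θ)⁻¹ := by
  set m : ℝ → ℂ := fun θ ↦ α * Real.cos θ + β * Real.sin θ - c
  have hm_re (θ : ℝ) : (m θ).re ≤ -(c - √(α.re ^ 2 + β.re ^ 2)) := by
    have := mul_cos_add_mul_sin_le_sqrt α.re β.re θ
    simp only [m, sub_re, add_re, re_mul_ofReal, ofReal_re]
    linarith
  have hpolar : ∀ p ∈ Ioi 0 ×ˢ Ioo (-π) π, p.1 • (fun q : ℝ × ℝ ↦
      cexp (α * q.1 + β * q.2 - c * √(q.1 ^ 2 + q.2 ^ 2)) / √(q.1 ^ 2 + q.2 ^ 2))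
        (polarCoord.symm p) = cexp (p.1 * m p.2) := by
    rintro ⟨r, θ⟩ ⟨hr, -⟩
    have hnorm : √((r * Real.cos θ) ^ 2 + (r * Real.sin θ) ^ 2) = r := by
      rw [mul_pow, mul_pow, ← mul_add, Real.cos_sq_add_sin_sq, mul_one,
        Real.sqrt_sq (le_of_lt hr)]
    have hr : (r : ℂ) ≠ 0 := ofReal_ne_zero.mpr hr.ne'
    simp only [polarCoord_symm_apply, hnorm, real_smul, m]
    rw [mul_div_cancel₀ _ hr]
    push_cast
    ring_nf
  rw [← integral_comp_polarCoord_symm, polarCoord_target,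
    setIntegral_congr_fun (measurableSet_Ioi.prod measurableSet_Ioo) hpolar,
    setIntegral_Ioi_prod_cexp_mul (by fun_prop) (sub_pos.mpr hc) hm_re
      (by linarith [Real.pi_pos])]
  congr 1 with θ
  simp only [m]
  ring_nf

theorem norm_one_add_I_mul_sub_lt {u v : ℝ} {w : ℂ} (hw_re : 0 ≤ w.re)
    (hw : w ^ 2 = (u - I) ^ 2 + (v - I) ^ 2 + 3) :
    ‖1 + I * u - I * (1 + I * v)‖ < ‖√3 + w‖ := by
  have hre : w.re ^ 2 - w.im ^ 2 = u ^ 2 + v ^ 2 + 1 := by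
    have := congrArg re hw
    simp only [sq, mul_re, add_re, sub_re, sub_im, ofReal_re, ofReal_im, I_re, I_im,
      re_ofNat] at this
    linarith
  have h3 : √3 ^ 2 = 3 := Real.sq_sqrt (by norm_num)
  have hlt : |v - u| < √3 * w.re := by
    refine abs_lt_of_sq_lt_sq ?_ (by positivity)
    nlinarith [sq_nonneg (u + v), sq_nonneg w.im]
  rw [← sq_lt_sq₀ (norm_nonneg _) (norm_nonneg _), Complex.sq_norm, Complex.sq_norm,
    normSq_apply, normSq_apply]
  simp only [sub_re, add_re, one_re, mul_re, I_re, ofReal_re, zero_mul, I_im, ofReal_im,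
    mul_zero, sub_self, add_zero, mul_one, add_im, one_im, mul_im, one_mul, zero_add, zero_sub,
    sub_neg_eq_add, sub_im]
  nlinarith [le_abs_self (v - u), sq_nonneg w.im]

theorem norm_one_add_I_mul_add_lt {u v : ℝ} {w : ℂ} (hw_re : 0 ≤ w.re)
    (hw : w ^ 2 = (u - I) ^ 2 + (v - I) ^ 2 + 3) :
    ‖1 + I * u + I * (1 + I * v)‖ < ‖√3 + w‖ := by
  have hrot : 1 + I * u + I * (1 + I * v) = I * (1 + I * v - I * (1 + I * u)) := by
    linear_combination (1 + I * u) * I_sq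
  rw [hrot, norm_mul, norm_I, one_mul]
  exact norm_one_add_I_mul_sub_lt hw_re (by rw [hw]; ring)

theorem pinned_fourier_transform_F (u v : ℝ) :
    (1 / (2 * (Real.pi : ℂ))) *
      ∫ p : ℝ × ℝ,
        Complex.exp ((1 + Complex.I * u) * (p.1 : ℂ) + (1 + Complex.I * v) * (p.2 : ℂ) -
            (Real.sqrt 3 : ℂ) * (Real.sqrt (p.1 ^ 2 + p.2 ^ 2) : ℂ)) /
          (Real.sqrt (p.1 ^ 2 + p.2 ^ 2) : ℂ) =
    (((u : ℂ) - Complex.I) ^ 2 + ((v : ℂ) - Complex.I) ^ 2 + 3) ^ (-(1 / 2) : ℂ) := by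
  set w := (((u : ℂ) - I) ^ 2 + ((v : ℂ) - I) ^ 2 + 3) ^ (2⁻¹ : ℂ)
  have hw : w ^ 2 = ((u : ℂ) - I) ^ 2 + ((v : ℂ) - I) ^ 2 + 3 := cpow_ofNat_inv_pow _ 2
  have hw_re : 0 ≤ w.re := by rw [cpow_inv_two_re]; positivity
  have hsqrt3 : ((√3 : ℝ) : ℂ) ^ 2 = 3 := by rw [← ofReal_pow, Real.sq_sqrt (by norm_num)]; simp
  have hc : √((1 + I * u).re ^ 2 + (1 + I * v).re ^ 2) < √3 := by norm_num
  have hangular := integral_inv_sub_mul_cos_sub_mul_sin_s13 (c := √3) (α := 1 + I * u)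
    (β := 1 + I * v) (by linear_combination hw - hsqrt3 + (u ^ 2 + v ^ 2 + 2) * I_sq)
    (norm_one_add_I_mul_sub_lt hw_re hw) (norm_one_add_I_mul_add_lt hw_re hw) (-π)
  rw [show -π + 2 * π = π by ring] at hangular
  rw [integral_cexp_sub_mul_sqrt_div_sqrt hc, hangular,
    show (-(1 / 2) : ℂ) = -2⁻¹ by norm_num, cpow_neg]
  change _ = w⁻¹
  field_simp
end
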